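/- Lipschitz continuity of the graphon equilibrium: suppose the graphon W is Lipschitz, |W(x₁,y) − W(x₂,y)| ≤ L|x₁ − x₂| for all y, the payoff U satisfies the strong concavity (constant α_U) and gradient Lipschitz (constant ℓ_U) assumptions, strategy sets are a common compact convex set S with max_{s∈S}‖s‖ = s_max, and (ℓ_U/α_U)λ_max(𝕎) < 1. Then the unique Nash equilibrium s̄ is Lipschitz continuous with constant L_s = (ℓ_U·L·s_max)/α_U: ‖s̄(x₁) − s̄(x₂)‖ ≤ L_s|x₁ − x₂|. -/

import Mathlib

/-!
At a maximiser `s₁` over a convex set of an `α`-strongly concave `f₁`,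
`f₁ s₂ + α/2 ‖s₁ - s₂‖² ≤ f₁ s₁`. Adding this to the same inequality for `f₂` and its maximiser
`s₂`, and bounding `(f₁ - f₂) s₁ - (f₁ - f₂) s₂` by the mean value theorem, gives
`α ‖s₁ - s₂‖² ≤ δ ‖s₁ - s₂‖` whenever `‖∇f₁ - ∇f₂‖ ≤ δ`. For the equilibrium take
`f_i = U · z̄(x_i)`, so `δ = ℓU ‖z̄(x₁) - z̄(x₂)‖`, and `z̄` is `L smax`-Lipschitz because `W` is
`L`-Lipschitz in `x` and `s̄` stays in the strategy set.
-/

open MeasureTheory Set Filter Topology InnerProductSpace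
open scoped Gradient

lemma StrongConcaveOn.subset {E : Type*} [NormedAddCommGroup E] [NormedSpace ℝ E]
    {s t : Set E} {m : ℝ} {f : E → ℝ} (hf : StrongConcaveOn t m f) (hst : s ⊆ t)
    (hs : Convex ℝ s) : StrongConcaveOn s m f :=
  ⟨hs, fun _ hx _ hy => hf.2 (hst hx) (hst hy)⟩

lemma StrongConcaveOn.add_le_of_isMaxOn {E : Type*} [NormedAddCommGroup E] [NormedSpace ℝ E]
    {s : Set E} {m : ℝ} {f : E → ℝ} {x y : E} (hf : StrongConcaveOn s m f) (hx : x ∈ s)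
    (hy : y ∈ s) (hmax : IsMaxOn f s x) :
    f y + m / 2 * ‖x - y‖ ^ 2 ≤ f x := by
  set k := m / 2 * ‖x - y‖ ^ 2 with hk
  have hseg : ∀ t ∈ Ioo (0 : ℝ) 1, f y + (1 - t) * k ≤ f x := by
    rintro t ⟨ht₀, ht₁⟩
    have hconc := hf.2 hx hy (sub_nonneg.2 ht₁.le) ht₀.le (sub_add_cancel 1 t)
    have hle : f ((1 - t) • x + t • y) ≤ f x :=
      hmax (hf.1 hx hy (sub_nonneg.2 ht₁.le) ht₀.le (sub_add_cancel 1 t))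
    simp only [smul_eq_mul, ← hk] at hconc
    have : t * (f y + (1 - t) * k) ≤ t * f x := by linear_combination hconc + hle
    exact le_of_mul_le_mul_left this ht₀
  have hlim : Tendsto (fun t : ℝ => f y + (1 - t) * k) (𝓝[>] 0) (𝓝 (f y + k)) := by
    refine tendsto_nhdsWithin_of_tendsto_nhds ?_
    simpa using (((continuous_const (y := (1 : ℝ))).sub continuous_id).mul
      (continuous_const (y := k))).const_add (f y) |>.tendsto (0 : ℝ)
  exact le_of_tendsto hlim (eventually_of_mem (Ioo_mem_nhdsGT one_pos) hseg)

lemma norm_fderiv_eq_norm_gradient {𝕜 F : Type*} [RCLike 𝕜] [NormedAddCommGroup F]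
    [InnerProductSpace 𝕜 F] [CompleteSpace F] (f : F → 𝕜) (x : F) :
    ‖fderiv 𝕜 f x‖ = ‖∇ f x‖ := by
  rw [← toDual_gradient, LinearIsometryEquiv.norm_map]

lemma gradient_sub {𝕜 F : Type*} [RCLike 𝕜] [NormedAddCommGroup F]
    [InnerProductSpace 𝕜 F] [CompleteSpace F] {f g : F → 𝕜} {x : F}
    (hf : DifferentiableAt 𝕜 f x) (hg : DifferentiableAt 𝕜 g x) :
    ∇ (f - g) x = ∇ f x - ∇ g x := by
  rw [gradient, fderiv_sub hf hg, map_sub, gradient, gradient]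

section Maximisers

variable {E : Type*} [NormedAddCommGroup E] [InnerProductSpace ℝ E] [CompleteSpace E]
  {S : Set E} {f₁ f₂ : E → ℝ} {δ : ℝ}

lemma Convex.sub_sub_sub_le_of_norm_gradient_sub_le (hS : Convex ℝ S)
    (hf₁ : ∀ x ∈ S, DifferentiableAt ℝ f₁ x) (hf₂ : ∀ x ∈ S, DifferentiableAt ℝ f₂ x)
    (hδ : ∀ x ∈ S, ‖∇ f₁ x - ∇ f₂ x‖ ≤ δ) {a b : E} (ha : a ∈ S) (hb : b ∈ S) :
    (f₁ a - f₂ a) - (f₁ b - f₂ b) ≤ δ * ‖a - b‖ := by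
  have hbound : ∀ x ∈ S, ‖fderiv ℝ (f₁ - f₂) x‖ ≤ δ := fun x hx => by
    rw [norm_fderiv_eq_norm_gradient, gradient_sub (hf₁ x hx) (hf₂ x hx)]
    exact hδ x hx
  exact (le_abs_self _).trans <|
    hS.norm_image_sub_le_of_norm_fderiv_le (fun x hx => (hf₁ x hx).sub (hf₂ x hx)) hbound hb ha

lemma norm_sub_le_of_isMaxOn_of_norm_gradient_sub_le {α : ℝ} (hα : 0 < α)
    (hc₁ : StrongConcaveOn S α f₁) (hc₂ : StrongConcaveOn S α f₂)
    (hf₁ : ∀ x ∈ S, DifferentiableAt ℝ f₁ x) (hf₂ : ∀ x ∈ S, DifferentiableAt ℝ f₂ x)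
    (hδ : ∀ x ∈ S, ‖∇ f₁ x - ∇ f₂ x‖ ≤ δ) {s₁ s₂ : E} (hs₁ : s₁ ∈ S) (hs₂ : s₂ ∈ S)
    (hmax₁ : IsMaxOn f₁ S s₁) (hmax₂ : IsMaxOn f₂ S s₂) :
    ‖s₁ - s₂‖ ≤ δ / α := by
  have hgrowth₁ := hc₁.add_le_of_isMaxOn hs₁ hs₂ hmax₁
  have hgrowth₂ := hc₂.add_le_of_isMaxOn hs₂ hs₁ hmax₂
  rw [norm_sub_rev] at hgrowth₂
  have hmv := hc₁.1.sub_sub_sub_le_of_norm_gradient_sub_le hf₁ hf₂ hδ hs₁ hs₂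
  have hsq : α * ‖s₁ - s₂‖ ^ 2 ≤ δ * ‖s₁ - s₂‖ := by linarith
  rw [le_div_iff₀ hα]
  rcases (norm_nonneg (s₁ - s₂)).eq_or_lt with h0 | hpos
  · rw [← h0, zero_mul]
    exact (norm_nonneg _).trans (hδ s₁ hs₁)
  · nlinarith

end Maximisers

lemma norm_integral_smul_sub_integral_smul_le {α E : Type*} [MeasurableSpace α]
    [NormedAddCommGroup E] [NormedSpace ℝ E] {μ : Measure α} [IsProbabilityMeasure μ]
    {k₁ k₂ : α → ℝ} {f : α → E} {δ M : ℝ} (h₁ : Integrable (fun y => k₁ y • f y) μ)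
    (h₂ : Integrable (fun y => k₂ y • f y) μ) (hk : ∀ᵐ y ∂μ, |k₁ y - k₂ y| ≤ δ)
    (hf : ∀ᵐ y ∂μ, ‖f y‖ ≤ M) :
    ‖∫ y, k₁ y • f y ∂μ - ∫ y, k₂ y • f y ∂μ‖ ≤ δ * M := by
  rw [← integral_sub h₁ h₂]
  simpa using norm_integral_le_of_norm_le_const (μ := μ) (C := δ * M) <| by
    filter_upwards [hk, hf] with y hky hfy
    rw [← sub_smul, norm_smul, Real.norm_eq_abs]
    exact mul_le_mul hky hfy (norm_nonneg _) ((abs_nonneg _).trans hky)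

theorem stmt_19_general {n : ℕ} (W : ℝ → ℝ → ℝ)
    (hmeas : Measurable (Function.uncurry W))
    (hbd : ∀ x ∈ Set.Icc (0:ℝ) 1, ∀ y ∈ Set.Icc (0:ℝ) 1, W x y ∈ Set.Icc (0:ℝ) 1)
    (L : ℝ)
    (hLip : ∀ y ∈ Set.Icc (0:ℝ) 1, ∀ x₁ ∈ Set.Icc (0:ℝ) 1, ∀ x₂ ∈ Set.Icc (0:ℝ) 1,
      |W x₁ y - W x₂ y| ≤ L * |x₁ - x₂|)
    (U : EuclideanSpace ℝ (Fin n) → EuclideanSpace ℝ (Fin n) → ℝ)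
    (αU ℓU : ℝ) (hα : 0 < αU) (hℓ : 0 ≤ ℓU)
    (hU : ContDiff ℝ 1 (Function.uncurry U))
    (hconc : ∀ z, StrongConcaveOn Set.univ αU (fun s => U s z))
    (hgrad : ∀ s z₁ z₂,
      ‖gradient (fun s' => U s' z₁) s - gradient (fun s' => U s' z₂) s‖ ≤ ℓU * ‖z₁ - z₂‖)
    (Sc : Set (EuclideanSpace ℝ (Fin n)))
    (hSconv : Convex ℝ Sc)
    (smax : ℝ) (hsmax : ∀ s' ∈ Sc, ‖s'‖ ≤ smax)
    (sbar : ℝ → EuclideanSpace ℝ (Fin n))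
    (hsmeas : AEStronglyMeasurable sbar ((volume : Measure ℝ).restrict (Set.Icc (0:ℝ) 1)))
    (hNE : ∀ x ∈ Set.Icc (0:ℝ) 1, sbar x ∈ Sc ∧
      IsMaxOn (fun s' => U s' (∫ y in Set.Icc (0:ℝ) 1, W x y • sbar y)) Sc (sbar x)) :
    ∀ x₁ ∈ Set.Icc (0:ℝ) 1, ∀ x₂ ∈ Set.Icc (0:ℝ) 1,
      ‖sbar x₁ - sbar x₂‖ ≤ (ℓU * L * smax / αU) * |x₁ - x₂| := by
  intro x₁ hx₁ x₂ hx₂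
  have : IsProbabilityMeasure ((volume : Measure ℝ).restrict (Icc (0:ℝ) 1)) := ⟨by simp⟩
  have hsbd : ∀ᵐ y ∂(volume.restrict (Icc (0:ℝ) 1)), ‖sbar y‖ ≤ smax :=
    (ae_restrict_iff' measurableSet_Icc).2 (ae_of_all _ fun y hy => hsmax _ (hNE y hy).1)
  have hint : ∀ x ∈ Icc (0:ℝ) 1,
      Integrable (fun y => W x y • sbar y) (volume.restrict (Icc (0:ℝ) 1)) := fun x hx =>
    (Integrable.of_bound hsmeas smax hsbd).bdd_smul 1
      (hmeas.comp measurable_prodMk_left).aestronglyMeasurable <|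
      (ae_restrict_iff' measurableSet_Icc).2 <| ae_of_all _ fun y hy => by
        obtain ⟨h0, h1⟩ := hbd x hx y hy
        show ‖W x y‖ ≤ 1
        rwa [Real.norm_eq_abs, abs_of_nonneg h0]
  have hz := norm_integral_smul_sub_integral_smul_le (hint x₁ hx₁) (hint x₂ hx₂)
    ((ae_restrict_iff' measurableSet_Icc).2 (ae_of_all _ fun y hy => hLip y hy x₁ hx₁ x₂ hx₂))
    hsbd
  have hdiff : ∀ z, Differentiable ℝ fun s => U s z := fun z =>
    (hU.differentiable one_ne_zero).comp (differentiable_id.prodMk (differentiable_const z))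
  have hc := fun z => (hconc z).subset (subset_univ Sc) hSconv
  calc ‖sbar x₁ - sbar x₂‖
      ≤ ℓU * ‖(∫ y in Icc (0:ℝ) 1, W x₁ y • sbar y) - ∫ y in Icc (0:ℝ) 1, W x₂ y • sbar y‖ / αU :=
        norm_sub_le_of_isMaxOn_of_norm_gradient_sub_le hα (hc _) (hc _)
          (fun s _ => hdiff _ s) (fun s _ => hdiff _ s) (fun s _ => hgrad s _ _)
          (hNE x₁ hx₁).1 (hNE x₂ hx₂).1 (hNE x₁ hx₁).2 (hNE x₂ hx₂).2
    _ ≤ ℓU * (L * |x₁ - x₂| * smax) / αU := by gcongr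
    _ = ℓU * L * smax / αU * |x₁ - x₂| := by ring

/-- Lipschitz continuity of the graphon equilibrium: for an `L`-Lipschitz (in the
first argument) graphon `W`, a payoff `U` that is continuously differentiable,
`αU`-strongly concave in its own strategy with gradient `ℓU`-Lipschitz in the
aggregate, a common compact convex nonempty strategy set `Sc` bounded by `smax`,
and `(ℓU/αU)·λ_max(𝕎) < 1`, any Nash equilibrium `s̄` is Lipschitz with constant
`ℓU·L·smax/αU`. -/
theorem stmt_19 {n : ℕ} (W : ℝ → ℝ → ℝ)
    (hmeas : Measurable (Function.uncurry W))
    (hsym : ∀ x y, W x y = W y x)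
    (hbd : ∀ x ∈ Set.Icc (0:ℝ) 1, ∀ y ∈ Set.Icc (0:ℝ) 1, W x y ∈ Set.Icc (0:ℝ) 1)
    (L : ℝ)
    (hLip : ∀ y ∈ Set.Icc (0:ℝ) 1, ∀ x₁ ∈ Set.Icc (0:ℝ) 1, ∀ x₂ ∈ Set.Icc (0:ℝ) 1,
      |W x₁ y - W x₂ y| ≤ L * |x₁ - x₂|)
    (U : EuclideanSpace ℝ (Fin n) → EuclideanSpace ℝ (Fin n) → ℝ)
    (αU ℓU : ℝ) (hα : 0 < αU) (hℓ : 0 ≤ ℓU)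
    (hU : ContDiff ℝ 1 (Function.uncurry U))
    (hconc : ∀ z, StrongConcaveOn Set.univ αU (fun s => U s z))
    (hgrad : ∀ s z₁ z₂,
      ‖gradient (fun s' => U s' z₁) s - gradient (fun s' => U s' z₂) s‖ ≤ ℓU * ‖z₁ - z₂‖)
    (Sc : Set (EuclideanSpace ℝ (Fin n)))
    (hScomp : IsCompact Sc) (hSconv : Convex ℝ Sc) (hSne : Sc.Nonempty)
    (smax : ℝ) (hsmax : ∀ s' ∈ Sc, ‖s'‖ ≤ smax)
    (lam : ℝ) (hlam : 0 ≤ lam)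
    (hop : ∀ f : ℝ → ℝ, Measurable f →
      IntegrableOn (fun x => f x ^ 2) (Set.Icc (0:ℝ) 1) →
      ∫ x in Set.Icc (0:ℝ) 1, (∫ y in Set.Icc (0:ℝ) 1, W x y * f y) ^ 2 ≤
        lam ^ 2 * ∫ x in Set.Icc (0:ℝ) 1, f x ^ 2)
    (hcond : ℓU / αU * lam < 1)
    (sbar : ℝ → EuclideanSpace ℝ (Fin n))
    (hsmeas : AEStronglyMeasurable sbar ((volume : Measure ℝ).restrict (Set.Icc (0:ℝ) 1)))
    (hNE : ∀ x ∈ Set.Icc (0:ℝ) 1, sbar x ∈ Sc ∧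
      IsMaxOn (fun s' => U s' (∫ y in Set.Icc (0:ℝ) 1, W x y • sbar y)) Sc (sbar x)) :
    ∀ x₁ ∈ Set.Icc (0:ℝ) 1, ∀ x₂ ∈ Set.Icc (0:ℝ) 1,
      ‖sbar x₁ - sbar x₂‖ ≤ (ℓU * L * smax / αU) * |x₁ - x₂| :=
  stmt_19_general W hmeas hbd L hLip U αU ℓU hα hℓ hU hconc hgrad Sc hSconv smax hsmax sbar hsmeas
    hNE
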